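/- arXiv:2003.04863 — 5 statements merged into one kernel-verified Lean document; each statement's English description precedes it below -/
import Mathlib

section
/- For all real x, δ and every real p ≥ 2, one has 2^{-O(p)}·(|x|^{p-2}·δ² + |δ|^p) ≤ |x+δ|^p - |x|^p - p·|x|^{p-1}·sign(x)·δ ≤ 2^{O(p)}·(|x|^{p-2}·δ² + |δ|^p). Concretely: there exist constants c, C > 0 such that for all p ≥ 2 and all x, δ ∈ ℝ, c^p·(|x|^{p-2}δ² + |δ|^p) ≤ |x+δ|^p - |x|^p - p|x|^{p-1}sign(x)δ ≤ C^p·(|x|^{p-2}δ² + |δ|^p). -/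
/-!
Write `f(t) = |t|^p` and `D(x, δ) = f(x + δ) - f(x) - f'(x) δ`. Since `|t|^p = (t^2)^(p/2)` and
`s ↦ s^(p/2)` is convex on `[0, ∞)`, its tangent line at `x^2` gives
`D(x, δ) ≥ (p/2) |x|^(p-2) δ^2`.
Clarkson's inequality `2(|a|^p + |b|^p) ≤ |a + b|^p + |a - b|^p` at `a = x + δ/2`, `b = δ/2`,
together with `D(x, δ/2) ≥ 0`, gives `D(x, δ) ≥ 2^(1-p) |δ|^p`. For the upper bound,
`D(x, δ) ≤ D(x, δ) + D(x + δ, -δ) = (f'(x + δ) - f'(x)) δ`, and `f'` is Lipschitz with constant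
`p (p-1) (|x| + |δ|)^(p-2)` on `[-|x| - |δ|, |x| + |δ|]`.
-/

open Real

lemma rpow_tangent_le {q a b : ℝ} (hq : 1 ≤ q) (ha : 0 ≤ a) (hb : 0 ≤ b) :
    a ^ q + q * a ^ (q - 1) * (b - a) ≤ b ^ q := by
  rcases ha.eq_or_lt with rfl | ha
  · rcases hq.eq_or_lt with rfl | hq
    · simp
    · simp [zero_rpow (by linarith : q ≠ 0), zero_rpow (by linarith : q - 1 ≠ 0), rpow_nonneg hb]
  · have h := one_add_mul_self_le_rpow_one_add (s := b / a - 1)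
      (by linarith [div_nonneg hb ha.le]) hq
    rw [add_sub_cancel, div_rpow hb ha.le, le_div_iff₀ (rpow_pos_of_pos ha q)] at h
    calc a ^ q + q * a ^ (q - 1) * (b - a) = (1 + q * (b / a - 1)) * a ^ q := by
          rw [rpow_sub_one ha.ne']; field_simp
      _ ≤ b ^ q := h

lemma two_mul_rpow_add_div_two_le {q s t : ℝ} (hq : 1 ≤ q) (hs : 0 ≤ s) (ht : 0 ≤ t) :
    2 * ((s + t) / 2) ^ q ≤ s ^ q + t ^ q := by
  have hm : 0 ≤ (s + t) / 2 := by positivity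
  have hs' := rpow_tangent_le hq hm hs
  have ht' := rpow_tangent_le hq hm ht
  linear_combination hs' + ht'

lemma rpow_sub_rpow_le {q a b M : ℝ} (hq : 1 ≤ q) (hb : 0 ≤ b) (hba : b ≤ a) (haM : a ≤ M) :
    a ^ q - b ^ q ≤ q * M ^ (q - 1) * (a - b) := by
  have ha : 0 ≤ a := hb.trans hba
  calc a ^ q - b ^ q ≤ q * a ^ (q - 1) * (a - b) := by linarith [rpow_tangent_le hq ha hb]
    _ ≤ q * M ^ (q - 1) * (a - b) := by
        have : 0 ≤ a - b := by linarith
        gcongr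

lemma add_rpow_le_two_rpow_mul {r a b : ℝ} (hr : 0 ≤ r) (ha : 0 ≤ a) (hb : 0 ≤ b) :
    (a + b) ^ r ≤ 2 ^ r * (a ^ r + b ^ r) := by
  wlog hab : a ≤ b generalizing a b
  · simpa only [add_comm] using this hb ha (le_of_not_ge hab)
  calc (a + b) ^ r ≤ (2 * b) ^ r := by gcongr; linarith
    _ = 2 ^ r * b ^ r := mul_rpow zero_le_two hb
    _ ≤ 2 ^ r * (a ^ r + b ^ r) := by gcongr; linarith [rpow_nonneg ha r]

lemma self_le_two_rpow {p : ℝ} (hp : 1 ≤ p) : p ≤ 2 ^ p := by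
  have h := one_add_mul_self_le_rpow_one_add (s := 1) (by norm_num) hp
  norm_num at h
  linarith

lemma abs_rpow_eq_sq_rpow (p u : ℝ) : |u| ^ p = (u ^ 2) ^ (p / 2) := by
  rw [← sq_abs, ← rpow_two, ← rpow_mul (abs_nonneg u)]
  ring_nf

lemma abs_rpow_eq_abs_rpow_sub_two_mul_sq {p : ℝ} (hp : p ≠ 0) (u : ℝ) :
    |u| ^ p = |u| ^ (p - 2) * u ^ 2 := by
  rw [← sq_abs u, ← rpow_two, ← rpow_add' (abs_nonneg u) (by simpa using hp)]
  ring_nf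

lemma abs_rpow_sub_one_mul_sign (p x : ℝ) : |x| ^ (p - 1) * sign x = x * |x| ^ (p - 2) := by
  rcases lt_trichotomy x 0 with hx | rfl | hx
  · rw [sign_of_neg hx, show p - 1 = p - 2 + 1 by ring, rpow_add_one (abs_ne_zero.2 hx.ne),
      abs_of_neg hx]
    ring
  · simp [Real.sign_zero]
  · rw [sign_of_pos hx, show p - 1 = p - 2 + 1 by ring, rpow_add_one (abs_ne_zero.2 hx.ne'),
      abs_of_pos hx]
    ring

lemma abs_rpow_mul_sign_of_nonneg {q u : ℝ} (hq : 0 < q) (hu : 0 ≤ u) :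
    |u| ^ q * sign u = u ^ q := by
  rcases hu.eq_or_lt with rfl | hu
  · simp [zero_rpow hq.ne']
  · rw [abs_of_pos hu, sign_of_pos hu, mul_one]

lemma abs_rpow_mul_sign_neg (q u : ℝ) : |-u| ^ q * sign (-u) = -(|u| ^ q * sign u) := by
  rw [abs_neg, sign_neg, mul_neg]

lemma abs_rpow_mul_sign_sub_le {q a b M : ℝ} (hq : 1 ≤ q) (hba : b ≤ a) (haM : |a| ≤ M)
    (hbM : |b| ≤ M) :
    |a| ^ q * sign a - |b| ^ q * sign b ≤ q * M ^ (q - 1) * (a - b) := by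
  have of_nonneg : ∀ {a b : ℝ}, 0 ≤ b → b ≤ a → |a| ≤ M →
      |a| ^ q * sign a - |b| ^ q * sign b ≤ q * M ^ (q - 1) * (a - b) := by
    intro a b hb hba haM
    rw [abs_rpow_mul_sign_of_nonneg (by linarith) hb,
      abs_rpow_mul_sign_of_nonneg (by linarith) (hb.trans hba)]
    exact rpow_sub_rpow_le hq hb hba ((le_abs_self a).trans haM)
  have zero : |(0 : ℝ)| ^ q * sign 0 = 0 := by simp [Real.sign_zero]
  rcases le_total 0 b with hb | hb
  · exact of_nonneg hb hba haM
  rcases le_total a 0 with ha | ha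
  · have h := of_nonneg (a := -b) (b := -a) (by linarith) (by linarith) (by rwa [abs_neg])
    rw [abs_rpow_mul_sign_neg, abs_rpow_mul_sign_neg] at h
    linarith
  · have ha' := of_nonneg le_rfl ha haM
    have hb' := of_nonneg (a := -b) le_rfl (by linarith) (by rwa [abs_neg])
    rw [abs_rpow_mul_sign_neg] at hb'
    linarith

lemma abs_rpow_mul_sign_sub_mul_sub_le {q a b M : ℝ} (hq : 1 ≤ q) (haM : |a| ≤ M)
    (hbM : |b| ≤ M) :
    (|a| ^ q * sign a - |b| ^ q * sign b) * (a - b) ≤ q * M ^ (q - 1) * (a - b) ^ 2 := by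
  rcases le_total b a with h | h
  · calc (|a| ^ q * sign a - |b| ^ q * sign b) * (a - b)
        ≤ q * M ^ (q - 1) * (a - b) * (a - b) :=
          mul_le_mul_of_nonneg_right (abs_rpow_mul_sign_sub_le hq h haM hbM) (sub_nonneg.2 h)
      _ = q * M ^ (q - 1) * (a - b) ^ 2 := by ring
  · calc (|a| ^ q * sign a - |b| ^ q * sign b) * (a - b)
        = (|b| ^ q * sign b - |a| ^ q * sign a) * (b - a) := by ring
      _ ≤ q * M ^ (q - 1) * (b - a) * (b - a) :=
          mul_le_mul_of_nonneg_right (abs_rpow_mul_sign_sub_le hq h hbM haM) (sub_nonneg.2 h)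
      _ = q * M ^ (q - 1) * (a - b) ^ 2 := by ring

lemma clarkson_abs_rpow {p : ℝ} (hp : 2 ≤ p) (a b : ℝ) :
    2 * (|a| ^ p + |b| ^ p) ≤ |a + b| ^ p + |a - b| ^ p := by
  have hq : 1 ≤ p / 2 := by linarith
  simp only [abs_rpow_eq_sq_rpow p]
  calc 2 * ((a ^ 2) ^ (p / 2) + (b ^ 2) ^ (p / 2)) ≤ 2 * (a ^ 2 + b ^ 2) ^ (p / 2) := by
        gcongr; exact add_rpow_le_rpow_add (sq_nonneg a) (sq_nonneg b) hq
    _ = 2 * (((a + b) ^ 2 + (a - b) ^ 2) / 2) ^ (p / 2) := by ring_nf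
    _ ≤ ((a + b) ^ 2) ^ (p / 2) + ((a - b) ^ 2) ^ (p / 2) :=
        two_mul_rpow_add_div_two_le hq (sq_nonneg _) (sq_nonneg _)

noncomputable def absRpowBregman (p x δ : ℝ) : ℝ :=
  |x + δ| ^ p - |x| ^ p - p * |x| ^ (p - 1) * Real.sign x * δ

section absRpowBregman

variable {p : ℝ} (hp : 2 ≤ p) (x δ : ℝ)
include hp

lemma mul_sq_le_absRpowBregman : p / 2 * (|x| ^ (p - 2) * δ ^ 2) ≤ absRpowBregman p x δ := by
  have h := rpow_tangent_le (by linarith : 1 ≤ p / 2) (sq_nonneg x) (sq_nonneg (x + δ))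
  rw [← abs_rpow_eq_sq_rpow, ← abs_rpow_eq_sq_rpow, show p / 2 - 1 = (p - 2) / 2 by ring,
    ← abs_rpow_eq_sq_rpow] at h
  rw [absRpowBregman, mul_assoc p, abs_rpow_sub_one_mul_sign]
  linear_combination h

lemma absRpowBregman_nonneg : 0 ≤ absRpowBregman p x δ := by
  have : 0 ≤ p := by linarith
  exact le_trans (by positivity) (mul_sq_le_absRpowBregman hp x δ)

lemma two_mul_rpow_le_absRpowBregman : 2 * (|δ| / 2) ^ p ≤ absRpowBregman p x δ := by
  have hC := clarkson_abs_rpow hp (x + δ / 2) (δ / 2)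
  have hD := absRpowBregman_nonneg hp x (δ / 2)
  rw [show x + δ / 2 + δ / 2 = x + δ by ring, show x + δ / 2 - δ / 2 = x by ring, abs_div,
    abs_two] at hC
  unfold absRpowBregman at *
  linarith

lemma absRpowBregman_le_mul_sub :
    absRpowBregman p x δ ≤ p * (|x + δ| ^ (p - 1) * sign (x + δ) - |x| ^ (p - 1) * sign x) * δ := by
  have h := absRpowBregman_nonneg hp (x + δ) (-δ)
  unfold absRpowBregman at *
  rw [add_neg_cancel_right] at h
  linarith

lemma absRpowBregman_le_mul_sq :
    absRpowBregman p x δ ≤ p * (p - 1) * (|x| + |δ|) ^ (p - 2) * δ ^ 2 := by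
  have h := abs_rpow_mul_sign_sub_mul_sub_le (q := p - 1) (by linarith) (abs_add_le x δ)
    (le_add_of_nonneg_right (abs_nonneg δ))
  rw [add_sub_cancel_left, show p - 1 - 1 = p - 2 by ring] at h
  calc absRpowBregman p x δ
      ≤ p * ((|x + δ| ^ (p - 1) * sign (x + δ) - |x| ^ (p - 1) * sign x) * δ) := by
        linarith [absRpowBregman_le_mul_sub hp x δ]
    _ ≤ p * ((p - 1) * (|x| + |δ|) ^ (p - 2) * δ ^ 2) := by gcongr
    _ = p * (p - 1) * (|x| + |δ|) ^ (p - 2) * δ ^ 2 := by ring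

lemma half_rpow_mul_le_absRpowBregman :
    (1 / 2) ^ p * (|x| ^ (p - 2) * δ ^ 2 + |δ| ^ p) ≤ absRpowBregman p x δ := by
  have hsq := mul_sq_le_absRpowBregman hp x δ
  have hrpow := two_mul_rpow_le_absRpowBregman hp x δ
  have hA : 0 ≤ |x| ^ (p - 2) * δ ^ 2 := by positivity
  have half : (1 / 2 : ℝ) ^ p ≤ 1 / 2 := by
    simpa using rpow_le_rpow_of_exponent_ge (by norm_num : (0 : ℝ) < 1 / 2) (by norm_num)
      (by linarith : (1 : ℝ) ≤ p)
  have e : (|δ| / 2) ^ p = (1 / 2) ^ p * |δ| ^ p := by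
    rw [div_eq_mul_one_div, mul_comm, mul_rpow (by norm_num) (abs_nonneg δ)]
  nlinarith [mul_le_mul_of_nonneg_right half hA, mul_nonneg (by linarith : 0 ≤ p / 2 - 1) hA]

lemma absRpowBregman_le_eight_rpow_mul :
    absRpowBregman p x δ ≤ 8 ^ p * (|x| ^ (p - 2) * δ ^ 2 + |δ| ^ p) := by
  have hp0 : 0 ≤ p * (p - 1) := by nlinarith
  have hcoef : p * (p - 1) * 2 ^ (p - 2) ≤ 8 ^ p := by
    have h2p := self_le_two_rpow (by linarith : 1 ≤ p)
    have h8 : (8 : ℝ) ^ p = 2 ^ p * 2 ^ p * 2 ^ p := by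
      rw [← mul_rpow, ← mul_rpow] <;> norm_num
    rw [h8]
    have h2 : p * (p - 1) ≤ 2 ^ p * 2 ^ p := by nlinarith
    have h2' : (2 : ℝ) ^ (p - 2) ≤ 2 ^ p := rpow_le_rpow_of_exponent_le one_le_two (by linarith)
    gcongr
  calc absRpowBregman p x δ ≤ p * (p - 1) * (|x| + |δ|) ^ (p - 2) * δ ^ 2 :=
        absRpowBregman_le_mul_sq hp x δ
    _ ≤ p * (p - 1) * (2 ^ (p - 2) * (|x| ^ (p - 2) + |δ| ^ (p - 2))) * δ ^ 2 := by
        gcongr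
        exact add_rpow_le_two_rpow_mul (by linarith) (abs_nonneg x) (abs_nonneg δ)
    _ = p * (p - 1) * 2 ^ (p - 2) * (|x| ^ (p - 2) * δ ^ 2 + |δ| ^ p) := by
        rw [abs_rpow_eq_abs_rpow_sub_two_mul_sq (p := p) (by linarith : (0 : ℝ) < p).ne' δ]; ring
    _ ≤ 8 ^ p * (|x| ^ (p - 2) * δ ^ 2 + |δ| ^ p) := by gcongr

end absRpowBregman

theorem stmt1 :
    ∃ c C : ℝ, 0 < c ∧ 0 < C ∧
      ∀ p : ℝ, 2 ≤ p → ∀ x δ : ℝ,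
        c ^ p * (|x| ^ (p - 2) * δ ^ 2 + |δ| ^ p)
            ≤ |x + δ| ^ p - |x| ^ p - p * |x| ^ (p - 1) * Real.sign x * δ ∧
        |x + δ| ^ p - |x| ^ p - p * |x| ^ (p - 1) * Real.sign x * δ
            ≤ C ^ p * (|x| ^ (p - 2) * δ ^ 2 + |δ| ^ p) :=
  ⟨1 / 2, 8, by norm_num, by norm_num, fun p hp x δ =>
    ⟨half_rpow_mul_le_absRpowBregman hp x δ, absRpowBregman_le_eight_rpow_mul hp x δ⟩⟩
end

section
/- Fix a finite set E, positive weights w⁺_e, w⁻_e, positive slacks s⁺_e, s⁻_e, and congestion values ρ⁺_e, ρ⁻_e with w⁺_e ρ⁺_e / s⁺_e and w⁻_e ρ⁻_e / s⁻_e arbitrary reals. Define the new slacks (s⁺_e)' = s⁺_e(1 − ρ⁺_e) > 0 and (s⁻_e)' = s⁻_e(1 − ρ⁻_e) > 0. Then (1/2)·Σ_e ((w⁺_e(ρ⁺_e)²/(s⁺_e)' − w⁻_e(ρ⁻_e)²/(s⁻_e)')²) / (w⁺_e/((s⁺_e)')² + w⁻_e/((s⁻_e)')²) ≤ (1/2)·Σ_e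 (w⁺_e (ρ⁺_e)⁴ + w⁻_e (ρ⁻_e)⁴). -/
/-!
Per edge, with `a = w⁺ρ⁺²/s⁺'`, `A = w⁺/s⁺'²` and likewise `b`, `B` for the minus side, the summand
is `(a - b)² / (A + B)`. By Sedrakyan's inequality (Cauchy–Schwarz in Engel form) it is at most
`a²/A + b²/B`, and `a²/A = w⁺ρ⁺⁴`, `b²/B = w⁻ρ⁻⁴`: the new slacks cancel.
-/

lemma sq_sub_div_add_le {a b A B : ℝ} (hA : 0 < A) (hB : 0 < B) :
    (a - b) ^ 2 / (A + B) ≤ a ^ 2 / A + b ^ 2 / B := by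
  rw [div_add_div _ _ hA.ne' hB.ne', div_le_div_iff₀ (by positivity) (by positivity)]
  nlinarith [sq_nonneg (a * B + b * A), mul_pos hA hB]

lemma sq_mul_sq_div_div_div_sq {w s : ℝ} (hw : w ≠ 0) (hs : s ≠ 0) (ρ : ℝ) :
    (w * ρ ^ 2 / s) ^ 2 / (w / s ^ 2) = w * ρ ^ 4 := by
  field_simp

theorem stmt5_general {ι : Type*} [Fintype ι] (wp wm ρp ρm sp' sm' : ι → ℝ)
    (hwp : ∀ e, 0 < wp e) (hwm : ∀ e, 0 < wm e)
    (hsp'pos : ∀ e, 0 < sp' e) (hsm'pos : ∀ e, 0 < sm' e) :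
    (1 / 2) * ∑ e, (wp e * (ρp e) ^ 2 / sp' e - wm e * (ρm e) ^ 2 / sm' e) ^ 2
        / (wp e / (sp' e) ^ 2 + wm e / (sm' e) ^ 2)
      ≤ (1 / 2) * ∑ e, (wp e * (ρp e) ^ 4 + wm e * (ρm e) ^ 4) := by
  gcongr with e
  have hA : 0 < wp e / sp' e ^ 2 := div_pos (hwp e) (pow_pos (hsp'pos e) 2)
  have hB : 0 < wm e / sm' e ^ 2 := div_pos (hwm e) (pow_pos (hsm'pos e) 2)
  calc _ ≤ (wp e * ρp e ^ 2 / sp' e) ^ 2 / (wp e / sp' e ^ 2)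
          + (wm e * ρm e ^ 2 / sm' e) ^ 2 / (wm e / sm' e ^ 2) := sq_sub_div_add_le hA hB
    _ = wp e * ρp e ^ 4 + wm e * ρm e ^ 4 := by
      rw [sq_mul_sq_div_div_div_sq (hwp e).ne' (hsp'pos e).ne',
        sq_mul_sq_div_div_div_sq (hwm e).ne' (hsm'pos e).ne']

theorem stmt5 {ι : Type*} [Fintype ι] (wp wm sp sm ρp ρm sp' sm' : ι → ℝ)
    (hwp : ∀ e, 0 < wp e) (hwm : ∀ e, 0 < wm e)
    (hsp : ∀ e, 0 < sp e) (hsm : ∀ e, 0 < sm e)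
    (hsp' : ∀ e, sp' e = sp e * (1 - ρp e)) (hsm' : ∀ e, sm' e = sm e * (1 - ρm e))
    (hsp'pos : ∀ e, 0 < sp' e) (hsm'pos : ∀ e, 0 < sm' e) :
    (1 / 2) * ∑ e, (wp e * (ρp e) ^ 2 / sp' e - wm e * (ρm e) ^ 2 / sm' e) ^ 2
        / (wp e / (sp' e) ^ 2 + wm e / (sm' e) ^ 2)
      ≤ (1 / 2) * ∑ e, (wp e * (ρp e) ^ 4 + wm e * (ρm e) ^ 4) :=
  stmt5_general wp wm ρp ρm sp' sm' hwp hwm hsp'pos hsm'pos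
end

section
/- Let 𝓧 ⊆ ℝ^m be a linear subspace, h, k : 𝓧 → ℝ convex twice-differentiable functions, x ∈ 𝓧, and x* ∈ 𝓧 a minimizer of h. Suppose k(cδ) ≤ c²k(δ) for all c ∈ ℝ, δ ∈ 𝓧, and that k(δ) ≤ h(x+δ) − h(x) − ⟨∇h(x), δ⟩ ≤ β·k(δ) for all δ ∈ 𝓧, where β ≥ 1. Let δ* = argmin_{δ ∈ 𝓧} ⟨∇h(x), δ⟩ + k(δ), and suppose δ# ∈ 𝓧 satisfies ⟨∇h(x), δ#⟩ + k(δ#) ≤ (1/γ)(⟨∇h(x), δ*⟩ + k(δ*)) + ε with γ ≥ 1, ε ≥ 0. Then h(x) − h(x + δ#/β) ≥ (1/(βγ))·(h(x) − h(x*)) − ε/β. -/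
/-! By the upper sandwich bound and `k (c • δ) ≤ c ^ 2 * k δ`, along the damped step
`x + β⁻¹ • δ♯` the change of `h` is at most `β⁻¹` times the model value `∇h(x) δ♯ + k δ♯`.
That value is within `γ` and `ε` of the model minimum, and the lower sandwich bound at
`δ = x⋆ - x` puts the minimum below `h x⋆ - h x`. -/

section ModelDescent

variable {E : Type*} [AddCommGroup E] [Module ℝ E] (X : Submodule ℝ E) (f k : E → ℝ)

theorem model_min_le_sub (g : E → ℝ) {x y δ₀ : E} (hx : x ∈ X) (hy : y ∈ X)
    (hlower : ∀ δ ∈ X, k δ ≤ f (x + δ) - f x - g δ)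
    (hδ₀ : ∀ δ ∈ X, g δ₀ + k δ₀ ≤ g δ + k δ) :
    g δ₀ + k δ₀ ≤ f y - f x := by
  have hyx : y - x ∈ X := X.sub_mem hy hx
  have hlow := hlower _ hyx
  rw [add_sub_cancel] at hlow
  linarith [hδ₀ _ hyx]

theorem sub_le_inv_mul_model (g : E →ₗ[ℝ] ℝ) {x δ : E} {β : ℝ} (hβ : 0 < β) (hδ : δ ∈ X)
    (hupper : ∀ δ ∈ X, f (x + δ) - f x - g δ ≤ β * k δ)
    (hscale : ∀ (c : ℝ), ∀ δ ∈ X, k (c • δ) ≤ c ^ 2 * k δ) :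
    f (x + β⁻¹ • δ) - f x ≤ β⁻¹ * (g δ + k δ) := by
  have hup := hupper _ (X.smul_mem β⁻¹ hδ)
  have hk : β * k (β⁻¹ • δ) ≤ β⁻¹ * k δ := by
    calc β * k (β⁻¹ • δ) ≤ β * ((β⁻¹) ^ 2 * k δ) := by gcongr; exact hscale _ _ hδ
      _ = β⁻¹ * k δ := by field_simp
  rw [g.map_smul, smul_eq_mul] at hup
  linarith

end ModelDescent

theorem stmt9_general {m : ℕ} (X : Submodule ℝ (EuclideanSpace ℝ (Fin m)))
    (h k : EuclideanSpace ℝ (Fin m) → ℝ)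
    (x xstar : EuclideanSpace ℝ (Fin m)) (hx : x ∈ X) (hxstar : xstar ∈ X)
    (β γ ε : ℝ) (hβ : 1 ≤ β) (hγ : 1 ≤ γ)
    (hkhom : ∀ (c : ℝ) (δ : EuclideanSpace ℝ (Fin m)), δ ∈ X → k (c • δ) ≤ c ^ 2 * k δ)
    (hsand : ∀ δ ∈ X,
      k δ ≤ h (x + δ) - h x - fderiv ℝ h x δ ∧
      h (x + δ) - h x - fderiv ℝ h x δ ≤ β * k δ)
    (δstar : EuclideanSpace ℝ (Fin m))
    (hδstarmin : ∀ δ ∈ X, fderiv ℝ h x δstar + k δstar ≤ fderiv ℝ h x δ + k δ)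
    (δsharp : EuclideanSpace ℝ (Fin m)) (hδsharp : δsharp ∈ X)
    (happrox : fderiv ℝ h x δsharp + k δsharp
      ≤ (1 / γ) * (fderiv ℝ h x δstar + k δstar) + ε) :
    (1 / (β * γ)) * (h x - h xstar) - ε / β ≤ h x - h (x + (1 / β) • δsharp) := by
  have hβ0 : 0 < β := one_pos.trans_le hβ
  have hγ0 : 0 < γ := one_pos.trans_le hγ
  set g := fderiv ℝ h x
  have hstar : g δstar + k δstar ≤ h xstar - h x :=
    model_min_le_sub X h k g hx hxstar (fun δ hδ => (hsand δ hδ).1) hδstarmin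
  have hsharp : g δsharp + k δsharp ≤ γ⁻¹ * (h xstar - h x) + ε := by
    rw [one_div] at happrox
    exact happrox.trans (by gcongr)
  have hstep : h (x + β⁻¹ • δsharp) - h x ≤ β⁻¹ * (g δsharp + k δsharp) :=
    sub_le_inv_mul_model X h k (g : _ →ₗ[ℝ] ℝ) hβ0 hδsharp (fun δ hδ => (hsand δ hδ).2) hkhom
  have hdamped : β⁻¹ * (g δsharp + k δsharp) ≤ β⁻¹ * (γ⁻¹ * (h xstar - h x) + ε) := by gcongr
  rw [one_div β]
  have hlhs : 1 / (β * γ) * (h x - h xstar) - ε / β = -(β⁻¹ * (γ⁻¹ * (h xstar - h x) + ε)) := by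
    field_simp; ring
  linarith

theorem stmt9 {m : ℕ} (X : Submodule ℝ (EuclideanSpace ℝ (Fin m)))
    (h k : EuclideanSpace ℝ (Fin m) → ℝ)
    (hh : ContDiff ℝ 2 h) (hk : ContDiff ℝ 2 k)
    (hhconv : ConvexOn ℝ (X : Set (EuclideanSpace ℝ (Fin m))) h)
    (hkconv : ConvexOn ℝ (X : Set (EuclideanSpace ℝ (Fin m))) k)
    (x xstar : EuclideanSpace ℝ (Fin m)) (hx : x ∈ X) (hxstar : xstar ∈ X)
    (hmin : ∀ z ∈ X, h xstar ≤ h z)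
    (β γ ε : ℝ) (hβ : 1 ≤ β) (hγ : 1 ≤ γ) (hε : 0 ≤ ε)
    (hkhom : ∀ (c : ℝ) (δ : EuclideanSpace ℝ (Fin m)), δ ∈ X → k (c • δ) ≤ c ^ 2 * k δ)
    (hsand : ∀ δ ∈ X,
      k δ ≤ h (x + δ) - h x - fderiv ℝ h x δ ∧
      h (x + δ) - h x - fderiv ℝ h x δ ≤ β * k δ)
    (δstar : EuclideanSpace ℝ (Fin m)) (hδstar : δstar ∈ X)
    (hδstarmin : ∀ δ ∈ X, fderiv ℝ h x δstar + k δstar ≤ fderiv ℝ h x δ + k δ)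
    (δsharp : EuclideanSpace ℝ (Fin m)) (hδsharp : δsharp ∈ X)
    (happrox : fderiv ℝ h x δsharp + k δsharp
      ≤ (1 / γ) * (fderiv ℝ h x δstar + k δstar) + ε) :
    (1 / (β * γ)) * (h x - h xstar) - ε / β ≤ h x - h (x + (1 / β) • δsharp) :=
  stmt9_general X h k x xstar hx hxstar β γ ε hβ hγ hkhom hsand δstar hδstarmin δsharp hδsharp
    happrox
end

section
/- Let θ ∈ (0,1) and let log̃ be the quadratic extension of log with parameter θ (agreeing with log(1+t) on [−θ,θ] and extended quadratically outside). Then for all a > 0 and all x ∈ ℝ there exists α ∈ [(1+θ)^{-2}, (1−θ)^{-2}] such that (d/dx) log̃(1 + x/a) = 1/a − α·x/a². -/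
/-- The quadratic extension `log̃(1+t)` of the logarithm outside `[-θ, θ]`. -/
noncomputable def logTilde (θ t : ℝ) : ℝ :=
  if θ < t then
    Real.log (1 + θ) + (t - θ) / (1 + θ) - (t - θ) ^ 2 / (2 * (1 + θ) ^ 2)
  else if t < -θ then
    Real.log (1 - θ) + (t + θ) / (1 - θ) - (t + θ) ^ 2 / (2 * (1 - θ) ^ 2)
  else
    Real.log (1 + t)

/-!
On `[-θ, θ]` the derivative of `log̃(1 + ·)` is `1 / (1 + t) = 1 - t / (1 + t)`. For `t` beyond
the endpoint `c = ±θ` it equals `1 - (c / (1 + c) + (t - c) / (1 + c) ^ 2)`, so the slope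
`(1 - log̃'(1 + t)) / t` is the convex combination of `1 / (1 + c)` and `1 / (1 + c) ^ 2` with
weights `c / t` and `1 - c / t`; all of these lie in `[(1 + θ)⁻², (1 - θ)⁻²]`. This is the discrete
form of `log̃'(1 + t) = 1 + t ∫₀¹ log̃''(1 + s t) ds`. The chain rule through `x ↦ x / a` finishes.
-/

open Set Filter Topology

noncomputable def taylorLogOneAdd (c s : ℝ) : ℝ :=
  Real.log (1 + c) + (s - c) / (1 + c) - (s - c) ^ 2 / (2 * (1 + c) ^ 2)

theorem hasDerivAt_taylorLogOneAdd (c s : ℝ) :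
    HasDerivAt (taylorLogOneAdd c) (1 / (1 + c) - (s - c) / (1 + c) ^ 2) s := by
  have hlin : HasDerivAt (fun s : ℝ => s - c) 1 s := (hasDerivAt_id s).sub_const c
  exact (((hlin.div_const (1 + c)).const_add (Real.log (1 + c))).sub
    ((hlin.pow 2).div_const (2 * (1 + c) ^ 2))).congr_deriv (by field_simp; norm_num; ring)

theorem hasDerivAt_taylorLogOneAdd_self (c : ℝ) :
    HasDerivAt (taylorLogOneAdd c) (1 / (1 + c)) c := by
  simpa using hasDerivAt_taylorLogOneAdd c c

theorem hasDerivAt_log_one_add {t : ℝ} (ht : 1 + t ≠ 0) :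
    HasDerivAt (fun s => Real.log (1 + s)) (1 / (1 + t)) t := by
  simpa using ((hasDerivAt_id t).const_add 1).log ht

theorem HasDerivAt.of_eventuallyEq_nhdsLE_nhdsGE {f g h : ℝ → ℝ} {a f' : ℝ}
    (hg : HasDerivAt g f' a) (hh : HasDerivAt h f' a)
    (hfg : f =ᶠ[𝓝[≤] a] g) (hfh : f =ᶠ[𝓝[≥] a] h) : HasDerivAt f f' a := by
  have := (hg.hasDerivWithinAt.congr_of_eventuallyEq hfg (hfg.eq_of_nhdsWithin self_mem_Iic)).union
    (hh.hasDerivWithinAt.congr_of_eventuallyEq hfh (hfh.eq_of_nhdsWithin self_mem_Ici))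
  rwa [Iic_union_Ici, hasDerivWithinAt_univ] at this

section logTilde

variable {θ t : ℝ}

theorem logTilde_of_le (hθ : 0 ≤ θ) (h : θ ≤ t) : logTilde θ t = taylorLogOneAdd θ t := by
  rcases h.lt_or_eq with h | rfl
  · simp [logTilde, taylorLogOneAdd, h]
  · simp [logTilde, taylorLogOneAdd, show ¬ θ < -θ by linarith]

theorem logTilde_of_le_neg (hθ : 0 ≤ θ) (h : t ≤ -θ) :
    logTilde θ t = taylorLogOneAdd (-θ) t := by
  rcases h.lt_or_eq with h | rfl
  · simp [logTilde, taylorLogOneAdd, h, show ¬ θ < t by linarith, ← sub_eq_add_neg]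
  · simp [logTilde, taylorLogOneAdd, show ¬ θ < -θ by linarith]

theorem logTilde_of_mem_Icc (h : t ∈ Icc (-θ) θ) : logTilde θ t = Real.log (1 + t) := by
  simp [logTilde, h.1.not_gt, h.2.not_gt]

theorem hasDerivAt_logTilde_of_lt (hθ : 0 ≤ θ) (h : θ < t) :
    HasDerivAt (logTilde θ) (1 / (1 + θ) - (t - θ) / (1 + θ) ^ 2) t := by
  refine (hasDerivAt_taylorLogOneAdd θ t).congr_of_eventuallyEq ?_
  filter_upwards [Ioi_mem_nhds h] with s hs using logTilde_of_le hθ (le_of_lt hs)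

theorem hasDerivAt_logTilde_of_lt_neg (hθ : 0 ≤ θ) (h : t < -θ) :
    HasDerivAt (logTilde θ) (1 / (1 + -θ) - (t - -θ) / (1 + -θ) ^ 2) t := by
  refine (hasDerivAt_taylorLogOneAdd (-θ) t).congr_of_eventuallyEq ?_
  filter_upwards [Iio_mem_nhds h] with s hs using logTilde_of_le_neg hθ (le_of_lt hs)

theorem hasDerivAt_logTilde_of_mem_Icc (hθ0 : 0 < θ) (hθ1 : θ < 1) (h : t ∈ Icc (-θ) θ) :
    HasDerivAt (logTilde θ) (1 / (1 + t)) t := by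
  have hlog := hasDerivAt_log_one_add (show 1 + t ≠ 0 by linarith [h.1])
  rcases h.2.lt_or_eq with h₂ | rfl
  · rcases h.1.lt_or_eq with h₁ | rfl
    · refine hlog.congr_of_eventuallyEq ?_
      filter_upwards [Ioo_mem_nhds h₁ h₂] with s hs
      exact logTilde_of_mem_Icc (Ioo_subset_Icc_self hs)
    · refine (hasDerivAt_taylorLogOneAdd_self (-θ)).of_eventuallyEq_nhdsLE_nhdsGE hlog ?_ ?_
      · filter_upwards [self_mem_nhdsWithin] with s hs using logTilde_of_le_neg hθ0.le hs
      · filter_upwards [self_mem_nhdsWithin, nhdsWithin_le_nhds (Iio_mem_nhds h₂)] with s hs hs'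
        exact logTilde_of_mem_Icc ⟨hs, le_of_lt hs'⟩
  · refine hlog.of_eventuallyEq_nhdsLE_nhdsGE (hasDerivAt_taylorLogOneAdd_self t) ?_ ?_
    · filter_upwards [self_mem_nhdsWithin, nhdsWithin_le_nhds (Ioi_mem_nhds (neg_lt_self hθ0))]
        with s hs hs'
      exact logTilde_of_mem_Icc ⟨le_of_lt hs', hs⟩
    · filter_upwards [self_mem_nhdsWithin] with s hs using logTilde_of_le hθ0.le hs

theorem one_div_one_add_mem_Icc (hθ1 : θ < 1) (h : t ∈ Icc (-θ) θ) :
    1 / (1 + t) ∈ Icc (1 / (1 + θ) ^ 2) (1 / (1 - θ) ^ 2) := by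
  obtain ⟨h₁, h₂⟩ := h
  constructor <;> apply one_div_le_one_div_of_le <;> nlinarith

theorem one_div_one_add_sq_mem_Icc (hθ1 : θ < 1) (h : t ∈ Icc (-θ) θ) :
    1 / (1 + t) ^ 2 ∈ Icc (1 / (1 + θ) ^ 2) (1 / (1 - θ) ^ 2) := by
  obtain ⟨h₁, h₂⟩ := h
  constructor <;> apply one_div_le_one_div_of_le <;> nlinarith

theorem exists_mem_Icc_taylorLogOneAdd_deriv_eq {c : ℝ} (hθ1 : θ < 1) (hc : c ∈ Icc (-θ) θ)
    (ht : t ≠ 0) (hct : c / t ∈ Icc 0 1) :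
    ∃ α ∈ Icc (1 / (1 + θ) ^ 2) (1 / (1 - θ) ^ 2),
      1 / (1 + c) - (t - c) / (1 + c) ^ 2 = 1 - α * t := by
  refine ⟨c / t * (1 / (1 + c)) + (1 - c / t) * (1 / (1 + c) ^ 2),
    convex_Icc _ _ (one_div_one_add_mem_Icc hθ1 hc) (one_div_one_add_sq_mem_Icc hθ1 hc)
      hct.1 (sub_nonneg.2 hct.2) (add_sub_cancel _ _), ?_⟩
  have : 1 + c ≠ 0 := by linarith [hc.1, hc.2]
  field_simp
  ring

end logTilde

theorem exists_hasDerivAt_logTilde {θ : ℝ} (hθ0 : 0 < θ) (hθ1 : θ < 1) (t : ℝ) :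
    ∃ α ∈ Icc (1 / (1 + θ) ^ 2) (1 / (1 - θ) ^ 2), HasDerivAt (logTilde θ) (1 - α * t) t := by
  have hθ : θ ∈ Icc (-θ) θ := ⟨by linarith, le_rfl⟩
  have hθ' : -θ ∈ Icc (-θ) θ := ⟨le_rfl, by linarith⟩
  by_cases h₂ : θ < t
  · obtain ⟨α, hα, hderiv⟩ := exists_mem_Icc_taylorLogOneAdd_deriv_eq hθ1 hθ (by linarith)
      ⟨div_nonneg hθ0.le (by linarith), (div_le_one (by linarith)).2 h₂.le⟩
    exact ⟨α, hα, hderiv ▸ hasDerivAt_logTilde_of_lt hθ0.le h₂⟩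
  by_cases h₁ : t < -θ
  · obtain ⟨α, hα, hderiv⟩ := exists_mem_Icc_taylorLogOneAdd_deriv_eq hθ1 hθ' (by linarith)
      ⟨div_nonneg_of_nonpos (by linarith) (by linarith), (div_le_one_of_neg (by linarith)).2 h₁.le⟩
    exact ⟨α, hα, hderiv ▸ hasDerivAt_logTilde_of_lt_neg hθ0.le h₁⟩
  have h : t ∈ Icc (-θ) θ := ⟨not_lt.1 h₁, not_lt.1 h₂⟩
  refine ⟨1 / (1 + t), one_div_one_add_mem_Icc hθ1 h, ?_⟩
  have : 1 + t ≠ 0 := by linarith [h.1]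
  exact (hasDerivAt_logTilde_of_mem_Icc hθ0 hθ1 h).congr_deriv (by field_simp; ring)

theorem stmt12_general (θ : ℝ) (hθ : θ ∈ Set.Ioo (0 : ℝ) 1) (a : ℝ) (x : ℝ) :
    ∃ α ∈ Set.Icc (1 / (1 + θ) ^ 2) (1 / (1 - θ) ^ 2),
      deriv (fun x : ℝ => logTilde θ (x / a)) x = 1 / a - α * x / a ^ 2 := by
  obtain ⟨α, hα, hderiv⟩ := exists_hasDerivAt_logTilde hθ.1 hθ.2 (x / a)
  have hcomp := hderiv.comp x ((hasDerivAt_id' x).div_const a)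
  refine ⟨α, hα, hcomp.deriv.trans ?_⟩
  ring

theorem stmt12 (θ : ℝ) (hθ : θ ∈ Set.Ioo (0 : ℝ) 1) (a : ℝ) (ha : 0 < a) (x : ℝ) :
    ∃ α ∈ Set.Icc (1 / (1 + θ) ^ 2) (1 / (1 - θ) ^ 2),
      deriv (fun x : ℝ => logTilde θ (x / a)) x = 1 / a - α * x / a ^ 2 :=
  stmt12_general θ hθ a x
end

section
/- Let s⁺, s⁻ ∈ (0,1) with s⁺ + s⁻ = 1 and s⁺ ≤ s⁻ (so s⁻ ≥ 1/2). Let w⁺, w⁻, δ, γ, W > 0 with w⁺ ≤ δ·W, w⁻ ≤ δ·W, and δ²·W ≤ γ. Let f̃ ∈ ℝ with ρ⁺ = f̃/s⁺, ρ⁻ = −f̃/s⁻, and suppose |w⁺ρ⁺/s⁺| + |w⁻ρ⁻/s⁻| ≤ w⁺δ/s⁺ + w⁻δ/s⁻ + γ. If |ρ⁺| ≥ 2δ then |w⁺ρ⁺/s⁺| + |w⁻ρ⁻/s⁻| ≤ 6γ. -/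
/-!
The stretch bound charges each slack at most its own barrier term plus `γ`. When `|ρ⁺| ≥ 2δ`,
the barrier term `w⁺δ/s⁺` is at most half of the congestion term `|w⁺ρ⁺/s⁺|`, so it can be
absorbed into the left-hand side; the other barrier term `w⁻δ/s⁻` is at most `2γ` because
`s⁻ ≥ 1/2` and `w⁻δ ≤ δ²W ≤ γ`. Absorbing costs a factor `2`, giving `2 · 3γ`.
-/

lemma mul_div_le_half_abs_mul_div {w s δ ρ : ℝ} (hw : 0 ≤ w) (hs : 0 ≤ s)
    (hρ : 2 * δ ≤ |ρ|) : w * δ / s ≤ |w * ρ / s| / 2 := by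
  rw [abs_div, abs_mul, abs_of_nonneg hw, abs_of_nonneg hs, div_div, mul_comm s 2, ← div_div]
  gcongr
  rw [le_div_iff₀ two_pos]
  nlinarith

lemma mul_div_le_two_mul_of_le_mul {w s δ γ W : ℝ} (hw : 0 ≤ w) (hδ : 0 ≤ δ)
    (hs : 1 / 2 ≤ s) (hwW : w ≤ δ * W) (hγW : δ ^ 2 * W ≤ γ) : w * δ / s ≤ 2 * γ := by
  have hwδ : w * δ ≤ γ := by nlinarith
  rw [div_le_iff₀ (by linarith)]
  nlinarith [mul_nonneg hw hδ]

theorem stmt13_general (sp sm wp wm δ γ W : ℝ) (ρp ρm : ℝ)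
    (hsp : sp ∈ Set.Ioo (0 : ℝ) 1)
    (hsum : sp + sm = 1) (hle : sp ≤ sm)
    (hwp : 0 < wp) (hwm : 0 < wm) (hδ : 0 < δ)
    (hwmW : wm ≤ δ * W) (hγW : δ ^ 2 * W ≤ γ)
    (hstretch : |wp * ρp / sp| + |wm * ρm / sm| ≤ wp * δ / sp + wm * δ / sm + γ)
    (hbig : 2 * δ ≤ |ρp|) :
    |wp * ρp / sp| + |wm * ρm / sm| ≤ 6 * γ := by
  have hplus : wp * δ / sp ≤ |wp * ρp / sp| / 2 :=
    mul_div_le_half_abs_mul_div hwp.le hsp.1.le hbig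
  have hminus : wm * δ / sm ≤ 2 * γ :=
    mul_div_le_two_mul_of_le_mul hwm.le hδ.le (by linarith) hwmW hγW
  linarith [abs_nonneg (wm * ρm / sm)]

theorem stmt13 (sp sm wp wm δ γ W : ℝ) (ftil ρp ρm : ℝ)
    (hsp : sp ∈ Set.Ioo (0 : ℝ) 1) (hsm : sm ∈ Set.Ioo (0 : ℝ) 1)
    (hsum : sp + sm = 1) (hle : sp ≤ sm)
    (hwp : 0 < wp) (hwm : 0 < wm) (hδ : 0 < δ) (hγ : 0 < γ) (hW : 0 < W)
    (hwpW : wp ≤ δ * W) (hwmW : wm ≤ δ * W) (hγW : δ ^ 2 * W ≤ γ)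
    (hρp : ρp = ftil / sp) (hρm : ρm = -ftil / sm)
    (hstretch : |wp * ρp / sp| + |wm * ρm / sm| ≤ wp * δ / sp + wm * δ / sm + γ)
    (hbig : 2 * δ ≤ |ρp|) :
    |wp * ρp / sp| + |wm * ρm / sm| ≤ 6 * γ :=
  stmt13_general sp sm wp wm δ γ W ρp ρm hsp hsum hle hwp hwm hδ hwmW hγW hstretch hbig
end
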